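/- arXiv:1106.4466 — 4 statements merged into one kernel-verified Lean document; each statement's English description precedes it below -/
import Mathlib

section
/- Suppose ζ : [0,∞) × S² → ℝ extends to a smooth function on ℝ³ (via spherical coordinates) and satisfies ∂_r ζ|_{r=0} = 0. Then for each l ≥ 1 and |m| ≤ l, the spherical-harmonic coefficient ζ^{lm}(r) = ∫_{S²} ζ(r,ω) \overline{Y_{lm}(ω)} dω satisfies ζ^{lm}(r) = O(r²) as r → 0⁺. -/
open Real Set Filter MeasureTheory Asymptotics

local notation "E3" => EuclideanSpace ℝ (Fin 3)

noncomputable def sphParam : (Fin 2 → ℝ) → E3 := fun p =>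
  (PiLp.continuousLinearEquiv 2 ℝ (fun _ : Fin 3 => ℝ)).symm
    ![Real.sin (p 0) * Real.cos (p 1), Real.sin (p 0) * Real.sin (p 1), Real.cos (p 0)]

lemma sphParam_apply (p : Fin 2 → ℝ) (i : Fin 3) :
    sphParam p i = ![Real.sin (p 0) * Real.cos (p 1), Real.sin (p 0) * Real.sin (p 1),
      Real.cos (p 0)] i := rfl

lemma sphParam_contDiff : ContDiff ℝ 1 sphParam := by
  apply ((PiLp.continuousLinearEquiv 2 ℝ (fun _ : Fin 3 => ℝ)).symm).contDiff.comp
  apply contDiff_pi.2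
  intro i
  have h0 : ContDiff ℝ (1:ℕ∞) fun p : Fin 2 → ℝ => p 0 := contDiff_apply ℝ ℝ 0
  have h1 : ContDiff ℝ (1:ℕ∞) fun p : Fin 2 → ℝ => p 1 := contDiff_apply ℝ ℝ 1
  fin_cases i
  · simpa using (Real.contDiff_sin.comp h0).mul (Real.contDiff_cos.comp h1)
  · simpa using (Real.contDiff_sin.comp h0).mul (Real.contDiff_sin.comp h1)
  · exact Real.contDiff_cos.comp h0

lemma sphere_subset_image :
    Metric.sphere (0:E3) 1 ⊆ sphParam '' (Metric.closedBall 0 4) := by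
  intro ω hω
  have hnorm : ‖ω‖ = 1 := by simpa using hω
  have hsum : ω 0 ^ 2 + ω 1 ^ 2 + ω 2 ^ 2 = 1 := by
    have h := EuclideanSpace.norm_eq ω
    rw [hnorm] at h
    have h2 : Real.sqrt (∑ i : Fin 3, ω i ^ 2) = 1 := by
      simpa [sq_abs] using h.symm
    have := Real.sqrt_eq_one.mp h2
    simpa [Fin.sum_univ_three] using this
  have hω2 : ω 2 ∈ Set.Icc (-1:ℝ) 1 := by
    constructor <;> nlinarith [sq_nonneg (ω 0), sq_nonneg (ω 1), sq_nonneg (ω 2 + 1), sq_nonneg (ω 2 - 1)]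
  set θ := Real.arccos (ω 2) with hθ
  have hcos : Real.cos θ = ω 2 := Real.cos_arccos hω2.1 hω2.2
  have hsin : Real.sin θ = Real.sqrt (ω 0 ^ 2 + ω 1 ^ 2) := by
    rw [hθ, Real.sin_arccos]
    congr 1
    nlinarith
  have habsθ : |θ| ≤ 4 :=
    le_trans (abs_le.2 ⟨by linarith [Real.arccos_nonneg (ω 2), Real.pi_pos.le],
      Real.arccos_le_pi (ω 2)⟩) (by linarith [Real.pi_le_four])
  by_cases hz : (ω 0 = 0 ∧ ω 1 = 0)
  · refine ⟨![θ, 0], ?_, ?_⟩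
    · rw [Metric.mem_closedBall, dist_zero_right]
      rw [pi_norm_le_iff_of_nonneg (by norm_num)]
      intro i
      fin_cases i
      · simpa [Real.norm_eq_abs] using habsθ
      · simp
    · ext i
      fin_cases i <;>
        simp [sphParam_apply, hcos, hsin, hz.1, hz.2]
  · set z : ℂ := ⟨ω 0, ω 1⟩ with hzdef
    have hz0 : z ≠ 0 := by
      intro h
      apply hz
      rw [hzdef, Complex.ext_iff] at h
      simpa using h
    have habs : ‖z‖ = Real.sqrt (ω 0 ^ 2 + ω 1 ^ 2) := by
      rw [Complex.norm_def, Complex.normSq_mk]; ring_nf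
    set φ := Complex.arg z with hφ
    have hcφ : Real.cos φ = ω 0 / Real.sqrt (ω 0 ^ 2 + ω 1 ^ 2) := by
      rw [hφ, Complex.cos_arg hz0, habs]
    have hsφ : Real.sin φ = ω 1 / Real.sqrt (ω 0 ^ 2 + ω 1 ^ 2) := by
      rw [hφ, Complex.sin_arg, habs]
    have hs0 : Real.sqrt (ω 0 ^ 2 + ω 1 ^ 2) ≠ 0 := by
      rw [← habs]
      simpa using hz0
    refine ⟨![θ, φ], ?_, ?_⟩
    · rw [Metric.mem_closedBall, dist_zero_right]
      rw [pi_norm_le_iff_of_nonneg (by norm_num)]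
      intro i
      fin_cases i
      · simpa [Real.norm_eq_abs] using habsθ
      · simpa [Real.norm_eq_abs] using
          le_trans (Complex.abs_arg_le_pi z) (by linarith [Real.pi_le_four])
    · ext i
      fin_cases i <;>
        simp [sphParam_apply, hcos, hsin, hcφ, hsφ] <;>
        field_simp

lemma sphere_hausdorff_finite : μH[2] (Metric.sphere (0:E3) 1) ≠ ⊤ := by
  -- bound fderiv on the closed ball
  obtain ⟨C, hC⟩ := (isCompact_closedBall (0 : Fin 2 → ℝ) 4).exists_bound_of_continuousOn
    ((sphParam_contDiff.continuous_fderiv one_ne_zero).continuousOn.norm)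
  have hlip : LipschitzOnWith (C.toNNReal) sphParam (Metric.closedBall 0 4) := by
    apply Convex.lipschitzOnWith_of_nnnorm_fderiv_le
      (fun x _ => sphParam_contDiff.differentiable one_ne_zero x)
      (fun x hx => ?_) (convex_closedBall _ _)
    rw [← Real.toNNReal_coe (r := ‖fderiv ℝ sphParam x‖₊)]
    simp only [coe_nnnorm]
    exact Real.toNNReal_le_toNNReal (by simpa using hC x hx)
  have hvol : (μH[2] : Measure (Fin 2 → ℝ)) = volume := by
    have h := MeasureTheory.hausdorffMeasure_pi_real (ι := Fin 2)
    simpa using h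
  have h1 : μH[2] (Metric.sphere (0:E3) 1) ≤ μH[2] (sphParam '' Metric.closedBall 0 4) :=
    measure_mono sphere_subset_image
  have h2 := hlip.hausdorffMeasure_image_le (by norm_num : (0:ℝ) ≤ 2)
  have h3 : μH[(2:ℝ)] (Metric.closedBall (0 : Fin 2 → ℝ) 4) < ⊤ := by
    rw [hvol]; exact measure_closedBall_lt_top
  have h4 : (C.toNNReal : ENNReal) ^ (2:ℝ) < ⊤ :=
    ENNReal.rpow_lt_top_of_nonneg (by norm_num) (by simp)
  exact ((h1.trans h2).trans_lt (ENNReal.mul_lt_top h4 h3)).ne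

/-- If `ζ` is smooth on `ℝ³` with vanishing radial derivative at the
origin, then its spherical-harmonic coefficient against any spherical harmonic `Y`
with `l ≥ 1` (expressed by orthogonality of `Y` to the constants and to the linear
functions on the unit sphere, which captures exactly the modes `l ≥ 1`) is `O(r²)`
as `r → 0⁺`. -/
theorem stmt_5 (ζ : E3 → ℝ) (hζ : ContDiff ℝ (⊤ : ℕ∞) ζ)
    (hbc : fderiv ℝ ζ 0 = 0)
    (Y : E3 → ℂ) (hY_cont : ContinuousOn Y (Metric.sphere (0:E3) 1))
    (hY_orth0 : (∫ ω in Metric.sphere (0:E3) 1, Y ω ∂(μH[2])) = 0)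
    (hY_orth1 : ∀ i : Fin 3,
      (∫ ω in Metric.sphere (0:E3) 1, (ω i : ℂ) * Y ω ∂(μH[2])) = 0) :
    (fun r : ℝ => ∫ ω in Metric.sphere (0:E3) 1,
        (ζ (r • ω) : ℂ) * starRingEnd ℂ (Y ω) ∂(μH[2]))
      =O[nhdsWithin 0 (Ioi 0)] fun r => r ^ 2 := by
  have hfin : μH[2] (Metric.sphere (0:E3) 1) ≠ ⊤ := sphere_hausdorff_finite
  set μ := (μH[2] : Measure E3).restrict (Metric.sphere (0:E3) 1) with hμ
  haveI : IsFiniteMeasure μ := by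
    constructor
    rw [hμ, Measure.restrict_apply_univ]
    exact hfin.lt_top
  have hYm : AEStronglyMeasurable Y μ :=
    hY_cont.aestronglyMeasurable (Metric.isClosed_sphere.measurableSet)
  obtain ⟨M, hM⟩ := (isCompact_sphere (0:E3) 1).exists_bound_of_continuousOn hY_cont
  have hYint : Integrable Y μ := by
    apply Integrable.mono' (integrable_const M) hYm
    filter_upwards [ae_restrict_mem Metric.isClosed_sphere.measurableSet] with ω hω using hM ω hω
  -- Lipschitz bound on the derivative near 0
  obtain ⟨K, t, ht, hlip⟩ :=
    ((hζ.fderiv_right (m := 1) (WithTop.coe_le_coe.mpr le_top)).contDiffAt (x := 0)).exists_lipschitzOnWith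
  obtain ⟨ε, hε, hball⟩ := Metric.mem_nhds_iff.mp ht
  have h0t : (0:E3) ∈ t := mem_of_mem_nhds ht
  set δ := ε / 2 with hδdef
  have hδ : 0 < δ := by positivity
  have hgrad : ∀ x : E3, ‖x‖ ≤ δ → ‖fderiv ℝ ζ x‖ ≤ K * ‖x‖ := by
    intro x hx
    have hxt : x ∈ t := hball (by
      have hlt : ‖x‖ < ε := by simp only [hδdef] at hx; linarith
      simpa [Metric.mem_ball, dist_zero_right] using hlt)
    have h := hlip.dist_le_mul x hxt 0 h0t
    rw [dist_zero_right, hbc, dist_zero_right] at h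
    simpa using h
  have key : ∀ x : E3, ‖x‖ ≤ δ → ‖ζ x - ζ 0‖ ≤ K * ‖x‖ ^ 2 := by
    intro x hx
    have hb : ∀ y ∈ Metric.closedBall (0:E3) ‖x‖, ‖fderiv ℝ ζ y‖ ≤ K * ‖x‖ := by
      intro y hy
      rw [Metric.mem_closedBall, dist_zero_right] at hy
      exact le_trans (hgrad y (hy.trans hx))
        (mul_le_mul_of_nonneg_left hy K.coe_nonneg)
    have := (convex_closedBall (0:E3) ‖x‖).norm_image_sub_le_of_norm_fderiv_le
      (fun y _ => (hζ.differentiable (by simp)) y) hb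
      (Metric.mem_closedBall_self (norm_nonneg x))
      (by rw [Metric.mem_closedBall, dist_zero_right])
    calc ‖ζ x - ζ 0‖ ≤ K * ‖x‖ * ‖x - 0‖ := this
      _ = K * ‖x‖ ^ 2 := by rw [sub_zero]; ring
  rw [isBigO_iff]
  refine ⟨K * ∫ ω, ‖Y ω‖ ∂μ, ?_⟩
  filter_upwards [Ioc_mem_nhdsGT hδ] with r hr
  obtain ⟨hr0, hrδ⟩ := hr
  -- pointwise bound on the sphere
  have hpt : ∀ ω ∈ Metric.sphere (0:E3) 1,
      ‖((ζ (r • ω) - ζ 0 : ℝ) : ℂ) * starRingEnd ℂ (Y ω)‖ ≤ K * r ^ 2 * ‖Y ω‖ := by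
    intro ω hω
    have hωn : ‖ω‖ = 1 := by simpa using hω
    have hrω : ‖r • ω‖ = r := by
      rw [norm_smul, hωn, Real.norm_eq_abs, abs_of_pos hr0, mul_one]
    have := key (r • ω) (by rw [hrω]; exact hrδ)
    rw [hrω] at this
    rw [norm_mul, RCLike.norm_conj, Complex.norm_real]
    exact mul_le_mul_of_nonneg_right this (norm_nonneg _)
  -- split the integral
  have hcont1 : Continuous fun ω : E3 => ((ζ (r • ω) - ζ 0 : ℝ) : ℂ) := by
    apply Complex.continuous_ofReal.comp
    exact ((hζ.continuous).comp ((continuous_const : Continuous fun _ : E3 => r).smul continuous_id)).sub continuous_const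
  have h1m : AEStronglyMeasurable
      (fun ω : E3 => ((ζ (r • ω) - ζ 0 : ℝ) : ℂ) * starRingEnd ℂ (Y ω)) μ :=
    hcont1.aestronglyMeasurable.mul (continuous_star.comp_aestronglyMeasurable hYm)
  have h1int : Integrable
      (fun ω : E3 => ((ζ (r • ω) - ζ 0 : ℝ) : ℂ) * starRingEnd ℂ (Y ω)) μ := by
    apply Integrable.mono' ((hYint.norm).const_mul (K * r ^ 2)) h1m
    filter_upwards [ae_restrict_mem Metric.isClosed_sphere.measurableSet] with ω hω using hpt ω hω
  have hYconj : Integrable (fun ω : E3 => starRingEnd ℂ (Y ω)) μ := by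
    refine ⟨continuous_star.comp_aestronglyMeasurable hYm, ?_⟩
    have h2 := hYint.2
    rw [hasFiniteIntegral_iff_norm] at h2 ⊢
    simpa using h2
  have h2int : Integrable (fun ω : E3 => (ζ 0 : ℂ) * starRingEnd ℂ (Y ω)) μ :=
    hYconj.const_mul _
  have hconj0 : (∫ ω, starRingEnd ℂ (Y ω) ∂μ) = 0 := by
    rw [integral_conj]
    rw [hμ] at *
    rw [hY_orth0]
    simp
  have hsplit : (∫ ω, (ζ (r • ω) : ℂ) * starRingEnd ℂ (Y ω) ∂μ)
      = ∫ ω, ((ζ (r • ω) - ζ 0 : ℝ) : ℂ) * starRingEnd ℂ (Y ω) ∂μ := by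
    have : (fun ω : E3 => (ζ (r • ω) : ℂ) * starRingEnd ℂ (Y ω))
        = fun ω => ((ζ (r • ω) - ζ 0 : ℝ) : ℂ) * starRingEnd ℂ (Y ω)
          + (ζ 0 : ℂ) * starRingEnd ℂ (Y ω) := by
      funext ω; push_cast; ring
    rw [this, integral_add h1int h2int, integral_const_mul, hconj0, mul_zero, add_zero]
  rw [hsplit]
  have hbound := norm_integral_le_of_norm_le ((hYint.norm).const_mul (K * r ^ 2))
    (by filter_upwards [ae_restrict_mem Metric.isClosed_sphere.measurableSet] with ω hω using hpt ω hω)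
  calc ‖∫ ω, ((ζ (r • ω) - ζ 0 : ℝ) : ℂ) * starRingEnd ℂ (Y ω) ∂μ‖
      ≤ ∫ ω, K * r ^ 2 * ‖Y ω‖ ∂μ := hbound
    _ = K * r ^ 2 * ∫ ω, ‖Y ω‖ ∂μ := integral_const_mul _ _
    _ ≤ (K * ∫ ω, ‖Y ω‖ ∂μ) * ‖r ^ 2‖ := by
        rw [Real.norm_eq_abs, abs_of_pos (by positivity)]
        ring_nf
        exact le_refl _
end

section
/- Let T, K : [0,∞) → ℝ be smooth, positive, with T'(0) = K'(0) = 0, T, K → 1 at infinity with O(1/r) error, and T'/T + K'/K = O(1/r²) at infinity. Define s(r) = ∫_0^r K T dr' and V(s) = −(1/(rT²K²))(K'/K + T'/T) (with r = r(s)). Then V(s) = O(1) as s → 0 and V(s) = O(1/s³) as s → ∞; in particular V ∈ L¹(0,∞). -/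
open Real Set Filter MeasureTheory Asymptotics intervalIntegral Topology

/-- Under the particle-like asymptotics of `T, K`, with
`s(r) = ∫_0^r KT` and the effective potential `V = -(1/(rT²K²))(K'/K + T'/T)`
(written here as a function of `r`), one has `V = O(1)` as `s → 0` and
`V = O(1/s³)` as `s → ∞`; in particular `V ∈ L¹(0,∞)` in the `s`-variable,
expressed via the change of variables `ds = KT dr`. -/
theorem stmt_8 (T K : ℝ → ℝ)
    (hT_smooth : ContDiffOn ℝ (⊤ : ℕ∞) T (Ici 0)) (hK_smooth : ContDiffOn ℝ (⊤ : ℕ∞) K (Ici 0))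
    (hT_pos : ∀ r ∈ Ici (0:ℝ), 0 < T r) (hK_pos : ∀ r ∈ Ici (0:ℝ), 0 < K r)
    (hT'0 : derivWithin T (Ici 0) 0 = 0) (hK'0 : derivWithin K (Ici 0) 0 = 0)
    (hT_O : (fun r => T r - 1) =O[atTop] fun r => 1 / r)
    (hK_O : (fun r => K r - 1) =O[atTop] fun r => 1 / r)
    (hTK_O : (fun r => derivWithin T (Ici 0) r / T r + derivWithin K (Ici 0) r / K r)
      =O[atTop] fun r => 1 / r ^ 2)
    (s V : ℝ → ℝ)
    (hs : ∀ r ≥ 0, s r = ∫ t in (0:ℝ)..r, K t * T t)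
    (hV : ∀ r > 0, V r = -(1 / (r * T r ^ 2 * K r ^ 2)) *
      (derivWithin K (Ici 0) r / K r + derivWithin T (Ici 0) r / T r)) :
    (V =O[nhdsWithin 0 (Ioi 0)] fun _ => (1:ℝ)) ∧
    (V =O[atTop] fun r => 1 / s r ^ 3) ∧
    IntegrableOn (fun r => V r * (K r * T r)) (Ioi 0) := by
  have huD : UniqueDiffOn ℝ (Ici (0:ℝ)) := uniqueDiffOn_Ici 0
  have h0mem : (0:ℝ) ∈ Ici (0:ℝ) := self_mem_Ici
  have hT0pos : 0 < T 0 := hT_pos 0 h0mem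
  have hK0pos : 0 < K 0 := hK_pos 0 h0mem
  have hTcont : ContinuousOn T (Ici 0) := hT_smooth.continuousOn
  have hKcont : ContinuousOn K (Ici 0) := hK_smooth.continuousOn
  have hT'cont : ContinuousOn (derivWithin T (Ici 0)) (Ici 0) :=
    hT_smooth.continuousOn_derivWithin huD (by simp)
  have hK'cont : ContinuousOn (derivWithin K (Ici 0)) (Ici 0) :=
    hK_smooth.continuousOn_derivWithin huD (by simp)
  -- slope limits for the derivatives at 0
  have hslope : ∀ (f : ℝ → ℝ), ContDiffOn ℝ (⊤ : ℕ∞) f (Ici 0) → derivWithin f (Ici 0) 0 = 0 →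
      ∃ d : ℝ, Tendsto (fun r => derivWithin f (Ici 0) r / r) (nhdsWithin 0 (Ioi 0)) (𝓝 d) := by
    intro f hf hf0
    have hdiff : DifferentiableWithinAt ℝ (derivWithin f (Ici 0)) (Ici 0) 0 := by
      have h1 : ContDiffOn ℝ 1 (derivWithin f (Ici 0)) (Ici 0) :=
        hf.derivWithin huD (m := 1) (WithTop.coe_le_coe.mpr le_top)
      exact (h1.differentiableOn one_ne_zero) 0 h0mem
    refine ⟨derivWithin (derivWithin f (Ici 0)) (Ici 0) 0, ?_⟩
    have h := hdiff.hasDerivWithinAt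
    rw [hasDerivWithinAt_iff_tendsto_slope, Set.Ici_sdiff_left] at h
    refine h.congr fun r => ?_
    simp [slope_def_field, hf0]
  obtain ⟨dT, hdT⟩ := hslope T hT_smooth hT'0
  obtain ⟨dK, hdK⟩ := hslope K hK_smooth hK'0
  -- continuity of T, K at 0 within (0,∞)
  have hTc0 : Tendsto T (nhdsWithin 0 (Ioi 0)) (𝓝 (T 0)) :=
    (hTcont 0 h0mem).mono_left (nhdsWithin_mono _ Ioi_subset_Ici_self)
  have hKc0 : Tendsto K (nhdsWithin 0 (Ioi 0)) (𝓝 (K 0)) :=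
    (hKcont 0 h0mem).mono_left (nhdsWithin_mono _ Ioi_subset_Ici_self)
  -- Part 1: V tends to a finite limit at 0⁺
  have hVlim : Tendsto V (nhdsWithin 0 (Ioi 0)) (𝓝 (-(1 / (T 0 ^ 2 * K 0 ^ 2)) *
      (dK / K 0 + dT / T 0))) := by
    have hden : Tendsto (fun r => T r ^ 2 * K r ^ 2) (nhdsWithin 0 (Ioi 0))
        (𝓝 (T 0 ^ 2 * K 0 ^ 2)) := ((hTc0.pow 2).mul (hKc0.pow 2))
    have hdenne : T 0 ^ 2 * K 0 ^ 2 ≠ 0 := by positivity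
    have t1 : Tendsto (fun r => -(1 / (T r ^ 2 * K r ^ 2))) (nhdsWithin 0 (Ioi 0))
        (𝓝 (-(1 / (T 0 ^ 2 * K 0 ^ 2)))) := (tendsto_const_nhds.div hden hdenne).neg
    have t2 : Tendsto (fun r => derivWithin K (Ici 0) r / r / K r + derivWithin T (Ici 0) r / r / T r)
        (nhdsWithin 0 (Ioi 0)) (𝓝 (dK / K 0 + dT / T 0)) :=
      (hdK.div hKc0 hK0pos.ne').add (hdT.div hTc0 hT0pos.ne')
    refine (t1.mul t2).congr' ?_
    filter_upwards [self_mem_nhdsWithin] with r hr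
    rw [hV r hr]
    have hrne : r ≠ 0 := (ne_of_gt hr)
    have hTne : T r ≠ 0 := (hT_pos r (Set.mem_Ici.mpr (le_of_lt hr))).ne'
    have hKne : K r ≠ 0 := (hK_pos r (Set.mem_Ici.mpr (le_of_lt hr))).ne'
    field_simp
  have part1 : V =O[nhdsWithin 0 (Ioi 0)] fun _ => (1:ℝ) := hVlim.isBigO_one ℝ
  -- limits at infinity
  have hinv0 : Tendsto (fun r : ℝ => 1 / r) atTop (𝓝 0) := by
    simpa [one_div] using (tendsto_inv_atTop_zero : Tendsto (fun r : ℝ => r⁻¹) atTop (𝓝 0))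
  have hTtop : Tendsto T atTop (𝓝 1) := by
    have h0 : Tendsto (fun r => T r - 1) atTop (𝓝 0) := hT_O.trans_tendsto hinv0
    have := h0.add (tendsto_const_nhds (x := (1:ℝ)) (f := atTop))
    simpa using this
  have hKtop : Tendsto K atTop (𝓝 1) := by
    have h0 : Tendsto (fun r => K r - 1) atTop (𝓝 0) := hK_O.trans_tendsto hinv0
    have := h0.add (tendsto_const_nhds (x := (1:ℝ)) (f := atTop))
    simpa using this
  -- V = O(1/r³) at infinity
  have hb : (fun r => 1 / (r * T r ^ 2 * K r ^ 2)) =O[atTop] fun r => 1 / r := by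
    have hdentop : Tendsto (fun r => T r ^ 2 * K r ^ 2) atTop (𝓝 1) := by
      have := (hTtop.pow 2).mul (hKtop.pow 2)
      simpa using this
    have h1 : (fun r => 1 / (T r ^ 2 * K r ^ 2)) =O[atTop] (fun _ => (1:ℝ)) :=
      (tendsto_const_nhds.div hdentop one_ne_zero).isBigO_one ℝ
    have h2 := (isBigO_refl (fun r : ℝ => 1 / r) atTop).mul h1
    have heq : (fun r => 1 / (r * T r ^ 2 * K r ^ 2)) =
        fun r => (1 / r) * (1 / (T r ^ 2 * K r ^ 2)) := by
      funext r
      rw [mul_assoc, ← one_div_mul_one_div]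
    rw [heq]
    simpa using h2
  have hVr3 : V =O[atTop] fun r => 1 / r ^ 3 := by
    have hprod := hb.mul hTK_O
    have heq : V =ᶠ[atTop] fun r => -(1 / (r * T r ^ 2 * K r ^ 2) *
        (derivWithin T (Ici 0) r / T r + derivWithin K (Ici 0) r / K r)) := by
      filter_upwards [eventually_gt_atTop (0:ℝ)] with r hr
      rw [hV r hr]; ring
    have h3 : (fun r : ℝ => 1 / r * (1 / r ^ 2)) = fun r : ℝ => 1 / r ^ 3 := by
      funext r; field_simp
    have := heq.trans_isBigO hprod.neg_left
    rwa [h3] at this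
  -- boundedness of K*T on [0,∞)
  have hKTcont : ContinuousOn (fun r => K r * T r) (Ici 0) := hKcont.mul hTcont
  have hKT_bdd : ∃ M : ℝ, 1 ≤ M ∧ ∀ r ∈ Ici (0:ℝ), K r * T r ≤ M := by
    have hKTtop : Tendsto (fun r => K r * T r) atTop (𝓝 1) := by
      have := hKtop.mul hTtop; simpa using this
    have hev : ∀ᶠ r in atTop, K r * T r ≤ 2 :=
      hKTtop.eventually (eventually_le_nhds (by norm_num))
    obtain ⟨R, hR⟩ := eventually_atTop.mp hev
    obtain ⟨C, hC⟩ := (isCompact_Icc (a := (0:ℝ)) (b := max R 0)).exists_bound_of_continuousOn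
      (hKTcont.mono (Icc_subset_Ici_self))
    refine ⟨max (max C 2) 1, le_max_right _ 1, fun r hr => ?_⟩
    rcases le_or_gt r (max R 0) with h | h
    · have := hC r ⟨hr, h⟩
      calc K r * T r ≤ |K r * T r| := le_abs_self _
        _ ≤ C := by rw [← Real.norm_eq_abs]; exact this
        _ ≤ max (max C 2) 1 := le_trans (le_max_left _ _) (le_max_left _ _)
    · have := hR r (le_trans (le_max_left R 0) h.le)
      exact le_trans this (le_trans (le_max_right C 2) (le_max_left _ _))
  obtain ⟨M, hM1, hM⟩ := hKT_bdd
  have hMpos : (0:ℝ) < M := lt_of_lt_of_le one_pos hM1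
  -- interval integrability of K*T
  have hIntKT : ∀ r ≥ (0:ℝ), IntervalIntegrable (fun t => K t * T t) volume 0 r := by
    intro r hr
    apply ContinuousOn.intervalIntegrable
    rw [uIcc_of_le hr]
    exact hKTcont.mono Icc_subset_Ici_self
  -- positivity and growth bound for s
  have hspos : ∀ r > (0:ℝ), 0 < s r := by
    intro r hr
    rw [hs r hr.le]
    exact intervalIntegral_pos_of_pos_on (hIntKT r hr.le)
      (fun x hx => mul_pos (hK_pos x hx.1.le) (hT_pos x hx.1.le)) hr
  have hsle : ∀ r ≥ (0:ℝ), s r ≤ M * r := by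
    intro r hr
    rw [hs r hr]
    calc (∫ t in (0:ℝ)..r, K t * T t) ≤ ∫ _t in (0:ℝ)..r, M :=
          integral_mono_on hr (hIntKT r hr) intervalIntegrable_const
            (fun x hx => hM x hx.1)
      _ = M * r := by simp [mul_comm]
  -- Part 2
  have part2 : V =O[atTop] fun r => 1 / s r ^ 3 := by
    refine hVr3.trans ?_
    rw [isBigO_iff]
    refine ⟨M ^ 3, ?_⟩
    filter_upwards [eventually_gt_atTop (0:ℝ)] with r hr
    have hsr := hspos r hr
    have hsler := hsle r hr.le
    have h3 : s r ^ 3 ≤ M ^ 3 * r ^ 3 := by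
      calc s r ^ 3 ≤ (M * r) ^ 3 := pow_le_pow_left₀ hsr.le hsler 3
        _ = M ^ 3 * r ^ 3 := by ring
    have hr3 : (0:ℝ) < r ^ 3 := by positivity
    have hs3 : (0:ℝ) < s r ^ 3 := by positivity
    rw [Real.norm_eq_abs, Real.norm_eq_abs, abs_of_pos (by positivity),
      abs_of_pos (by positivity), mul_one_div, div_le_div_iff₀ hr3 hs3]
    nlinarith [h3]
  -- Part 3: integrability
  have hVcont : ContinuousOn V (Ioi 0) := by
    have hne : ∀ x ∈ Ioi (0:ℝ), x * T x ^ 2 * K x ^ 2 ≠ 0 := by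
      intro x hx
      have hx0 : (0:ℝ) < x := hx
      have := hT_pos x hx0.le
      have := hK_pos x hx0.le
      positivity
    have hcont : ContinuousOn (fun r => -(1 / (r * T r ^ 2 * K r ^ 2)) *
        (derivWithin K (Ici 0) r / K r + derivWithin T (Ici 0) r / T r)) (Ioi 0) := by
      apply ContinuousOn.mul
      · apply ContinuousOn.neg
        apply ContinuousOn.div continuousOn_const
        · exact (continuousOn_id.mul ((hTcont.mono Ioi_subset_Ici_self).pow 2)).mul
            ((hKcont.mono Ioi_subset_Ici_self).pow 2)
        · exact hne
      · apply ContinuousOn.add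
        · exact (hK'cont.mono Ioi_subset_Ici_self).div (hKcont.mono Ioi_subset_Ici_self)
            (fun x hx => (hK_pos x (Set.mem_Ici.mpr (le_of_lt hx))).ne')
        · exact (hT'cont.mono Ioi_subset_Ici_self).div (hTcont.mono Ioi_subset_Ici_self)
            (fun x hx => (hT_pos x (Set.mem_Ici.mpr (le_of_lt hx))).ne')
    exact hcont.congr fun r hr => hV r hr
  set f : ℝ → ℝ := fun r => V r * (K r * T r) with hfdef
  have hfcont : ContinuousOn f (Ioi 0) :=
    hVcont.mul (hKTcont.mono Ioi_subset_Ici_self)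
  -- bound near zero
  obtain ⟨C₀, hC₀⟩ := part1.bound
  obtain ⟨δ, hδpos, hδ⟩ := (nhdsGT_basis (0:ℝ)).eventually_iff.mp hC₀
  -- bound at infinity
  obtain ⟨C₁, hC₁⟩ := hVr3.bound
  obtain ⟨R, hR⟩ := eventually_atTop.mp hC₁
  set R' : ℝ := max R (max δ 1) with hR'def
  have hδR' : δ ≤ R' := le_trans (le_max_left δ 1) (le_max_right R _)
  have hR'pos : (0:ℝ) < R' := lt_of_lt_of_le one_pos (le_trans (le_max_right δ 1) (le_max_right R _))
  have hcover : Ioi (0:ℝ) ⊆ (Ioo 0 δ ∪ Icc δ R') ∪ Ioi R' := by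
    intro x hx
    rcases lt_or_ge x δ with h | h
    · exact Or.inl (Or.inl ⟨hx, h⟩)
    · rcases le_or_gt x R' with h2 | h2
      · exact Or.inl (Or.inr ⟨h, h2⟩)
      · exact Or.inr h2
  have hint1 : IntegrableOn f (Ioo 0 δ) := by
    refine Integrable.mono' (g := fun _ => (max C₀ 0) * M)
      (integrableOn_const measure_Ioo_lt_top.ne) ?_ ?_
    · exact (hfcont.mono Ioo_subset_Ioi_self).aestronglyMeasurable measurableSet_Ioo
    · rw [ae_restrict_iff' measurableSet_Ioo]
      refine ae_of_all _ fun r hr => ?_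
      have hVb : ‖V r‖ ≤ max C₀ 0 := by
        have := hδ ⟨hr.1, hr.2⟩
        simp only [norm_one, mul_one] at this
        exact le_trans this (le_max_left C₀ 0)
      have hKTpos : 0 < K r * T r := mul_pos (hK_pos r hr.1.le) (hT_pos r hr.1.le)
      have hKTb : ‖K r * T r‖ ≤ M := by
        rw [Real.norm_eq_abs, abs_of_pos hKTpos]; exact hM r hr.1.le
      calc ‖f r‖ = ‖V r‖ * ‖K r * T r‖ := norm_mul _ _
        _ ≤ max C₀ 0 * M := mul_le_mul hVb hKTb (norm_nonneg _) (le_max_right C₀ 0)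
  have hint2 : IntegrableOn f (Icc δ R') :=
    (hfcont.mono (fun x hx => lt_of_lt_of_le hδpos hx.1)).integrableOn_compact isCompact_Icc
  have hint3 : IntegrableOn f (Ioi R') := by
    have hg : IntegrableOn (fun r : ℝ => (max C₁ 0) * M * r ^ (-2:ℝ)) (Ioi R') :=
      (integrableOn_Ioi_rpow_of_lt (by norm_num) hR'pos).const_mul _
    refine Integrable.mono' hg
      ((hfcont.mono (fun x hx => lt_trans hR'pos hx)).aestronglyMeasurable measurableSet_Ioi) ?_
    rw [ae_restrict_iff' measurableSet_Ioi]
    refine ae_of_all _ fun r hr => ?_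
    have hrpos : (0:ℝ) < r := lt_trans hR'pos hr
    have hr1 : (1:ℝ) ≤ r := le_trans (le_trans (le_max_right δ 1) (le_max_right R _)) hr.le
    have hVb : ‖V r‖ ≤ max C₁ 0 * (1 / r ^ 3) := by
      have := hR r (le_trans (le_max_left R _) hr.le)
      calc ‖V r‖ ≤ C₁ * ‖1 / r ^ 3‖ := this
        _ ≤ max C₁ 0 * (1 / r ^ 3) := by
            rw [Real.norm_eq_abs, abs_of_pos (by positivity)]
            exact mul_le_mul_of_nonneg_right (le_max_left C₁ 0) (by positivity)
    have hKTpos : 0 < K r * T r := mul_pos (hK_pos r hrpos.le) (hT_pos r hrpos.le)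
    have hKTb : ‖K r * T r‖ ≤ M := by
      rw [Real.norm_eq_abs, abs_of_pos hKTpos]; exact hM r hrpos.le
    have hrw : r ^ (-2:ℝ) = 1 / r ^ 2 := by
      rw [Real.rpow_neg hrpos.le, one_div]
      norm_cast
    calc ‖f r‖ = ‖V r‖ * ‖K r * T r‖ := norm_mul _ _
      _ ≤ (max C₁ 0 * (1 / r ^ 3)) * M :=
          mul_le_mul (by exact hVb) hKTb (norm_nonneg _)
            (by positivity)
      _ ≤ max C₁ 0 * M * r ^ (-2:ℝ) := by
          rw [hrw]
          have h23 : (1:ℝ) / r ^ 3 ≤ 1 / r ^ 2 := by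
            apply one_div_le_one_div_of_le (by positivity)
            calc r ^ 2 = r ^ 2 * 1 := by ring
              _ ≤ r ^ 2 * r := by nlinarith
              _ = r ^ 3 := by ring
          have : (0:ℝ) ≤ max C₁ 0 * M := by positivity
          nlinarith [mul_le_mul_of_nonneg_left h23 this]
  have : IntegrableOn f ((Ioo 0 δ ∪ Icc δ R') ∪ Ioi R') := (hint1.union hint2).union hint3
  exact ⟨part1, part2, this.mono_set hcover⟩
end

section
/- Let Q(s) = ∫_s^∞ y|W(y)|/(1+|ω|y) · e^{(|Im ω|+Im ω)y} dy with Im ω ≤ 0 and W ∈ L¹(0,∞), and suppose |B(s,y)| ≤ C e^{|Im ω|y + (Im ω)s}(y/(1+|ω|y))^{λ+1/2}(s/(1+|ω|s))^{−λ+1/2} for 0 < s < y, and |η_0(s)| ≤ C(|ω|s/(1+|ω|s))^{−λ+1/2}e^{(Im ω)s}. Define η_{n+1}(s) = ∫_s^∞ B(s,y)W(y)η_n(y)dy. Then |η_n(s)| ≤ C (C Q(s))^n/n! · (|ω|s/(1+|ω|s))^{−λ+1/2} e^{(Im ω)s} for all n, and the series Σ η_n converges with |Ση_n(s) − η_0(s)|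 ≤ C e^{(Im ω)s}(|ω|s/(1+|ω|s))^{−λ+1/2}(e^{CQ(s)} − 1). -/
/-!
Let `f(y) = C y |W y| / (1 + |ω| y) e^{(|Im ω| + Im ω) y}`, integrable on `(0, ∞)` because
`Im ω ≤ 0` makes the exponential `1`, and `F(s) = ∫_s^∞ f = C Q(s)`. With the weight
`φ(s) = C (|ω|s/(1+|ω|s))^{-λ+1/2} e^{(Im ω)s}` the kernel bound reads
`‖B s y‖ |W y| φ(y) ≤ φ(s) f(y)`: the powers of `y/(1+|ω|y)` combine to the first power and the
exponentials to `e^{(Im ω)s}`. Hence `‖ηₙ(s)‖ ≤ φ(s) F(s)ⁿ/n!` by induction, the inductive step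
being `∫_s^∞ f Fⁿ = F(s)ⁿ⁺¹/(n+1)`, which follows from Fubini on `{s < y < t}`. Comparison with
the exponential series gives the rest.
-/

open Real Set MeasureTheory

theorem integral_Ioi_mul_integral_Ioi_eq_integral_Ioi_mul_integral_Ioo {f g : ℝ → ℝ} {s : ℝ}
    (hf : IntegrableOn f (Ioi s)) (hg : IntegrableOn g (Ioi s)) :
    ∫ y in Ioi s, g y * ∫ t in Ioi y, f t = ∫ t in Ioi s, f t * ∫ y in Ioo s t, g y := by
  set F : ℝ → ℝ → ℝ := fun y t => (Ioi y).indicator (fun t => g y * f t) t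
  have hF : ∀ y t, F y t = f t * (Iio t).indicator g y := by
    intro y t
    by_cases hyt : y < t
    · simp [F, hyt, mul_comm]
    · simp [F, hyt]
  have hint : Integrable (Function.uncurry F)
      ((volume.restrict (Ioi s)).prod (volume.restrict (Ioi s))) := by
    refine (hg.norm.mul_prod hf.norm).mono' ?_ (ae_of_all _ fun p => ?_)
    · exact (hg.aestronglyMeasurable.comp_fst.mul hf.aestronglyMeasurable.comp_snd).indicator
        (measurableSet_lt measurable_fst measurable_snd)
    · exact (norm_indicator_le_norm_self (fun t => g p.1 * f t) p.2).trans_eq (norm_mul _ _)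
  calc ∫ y in Ioi s, g y * ∫ t in Ioi y, f t
      = ∫ y in Ioi s, ∫ t in Ioi s, F y t := by
        refine setIntegral_congr_fun measurableSet_Ioi fun y (hy : s < y) => ?_
        rw [integral_indicator measurableSet_Ioi, Measure.restrict_restrict measurableSet_Ioi,
          Ioi_inter_Ioi, max_eq_left hy.le, integral_const_mul]
    _ = ∫ t in Ioi s, ∫ y in Ioi s, F y t := integral_integral_swap hint
    _ = ∫ t in Ioi s, f t * ∫ y in Ioo s t, g y := by
        refine setIntegral_congr_fun measurableSet_Ioi fun t _ => ?_
        simp only [hF]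
        rw [integral_const_mul, integral_indicator measurableSet_Iio,
          Measure.restrict_restrict measurableSet_Iio, Iio_inter_Ioi]

noncomputable def tailIntegral (f : ℝ → ℝ) (y : ℝ) : ℝ := ∫ t in Ioi y, f t

section TailIntegral

variable {f : ℝ → ℝ}

theorem tailIntegral_nonneg (hf0 : 0 ≤ f) (y : ℝ) : 0 ≤ tailIntegral f y :=
  integral_nonneg hf0

theorem tailIntegral_le_integral (hf : Integrable f) (hf0 : 0 ≤ f) (y : ℝ) :
    tailIntegral f y ≤ ∫ t, f t :=
  setIntegral_le_integral hf (ae_of_all _ hf0)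

theorem tailIntegral_antitone (hf : Integrable f) (hf0 : 0 ≤ f) : Antitone (tailIntegral f) :=
  fun _ _ hyz => setIntegral_mono_set hf.integrableOn (ae_of_all _ hf0)
    (Ioi_subset_Ioi hyz).eventuallyLE

theorem integrable_mul_tailIntegral_pow (hf : Integrable f) (hf0 : 0 ≤ f) (n : ℕ) :
    Integrable fun y => f y * tailIntegral f y ^ n := by
  have hmeas := (tailIntegral_antitone hf hf0).measurable.pow_const n
  refine (hf.mul_const ((∫ t, f t) ^ n)).mono'
    (hf.aestronglyMeasurable.mul hmeas.aestronglyMeasurable) (ae_of_all _ fun y => ?_)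
  rw [norm_mul, norm_pow, Real.norm_of_nonneg (hf0 y),
    Real.norm_of_nonneg (tailIntegral_nonneg hf0 y)]
  gcongr
  · exact hf0 y
  · exact tailIntegral_nonneg hf0 y
  · exact tailIntegral_le_integral hf hf0 y

theorem integral_Ioo_mul_tailIntegral_pow_of_integral_Ioi (hf : Integrable f) (hf0 : 0 ≤ f) {n : ℕ}
    {s t : ℝ} (hst : s ≤ t)
    (h : ∀ r, ∫ y in Ioi r, f y * tailIntegral f y ^ n = tailIntegral f r ^ (n + 1) / (n + 1)) :
    ∫ y in Ioo s t, f y * tailIntegral f y ^ n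
      = (tailIntegral f s ^ (n + 1) - tailIntegral f t ^ (n + 1)) / (n + 1) := by
  rw [integral_Ioc_eq_integral_Ioo.symm, ← intervalIntegral.integral_of_le hst,
    ← intervalIntegral.integral_Ioi_sub_Ioi
      (integrable_mul_tailIntegral_pow hf hf0 n).integrableOn hst,
    h, h, sub_div]

theorem integral_Ioi_mul_tailIntegral_pow (hf : Integrable f) (hf0 : 0 ≤ f) (n : ℕ) (s : ℝ) :
    ∫ y in Ioi s, f y * tailIntegral f y ^ n = tailIntegral f s ^ (n + 1) / (n + 1) := by
  induction n generalizing s with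
  | zero => simp [tailIntegral]
  | succ n ih =>
    set F := tailIntegral f
    set J := ∫ y in Ioi s, f y * F y ^ (n + 1)
    have hJ : J = (F s ^ (n + 1) * F s - J) / (n + 1) := calc
      J = ∫ y in Ioi s, (f y * F y ^ n) * ∫ t in Ioi y, f t := by
          simp only [J, F, tailIntegral, pow_succ, mul_assoc]
      _ = ∫ t in Ioi s, f t * ∫ y in Ioo s t, f y * F y ^ n :=
          integral_Ioi_mul_integral_Ioi_eq_integral_Ioi_mul_integral_Ioo hf.integrableOn
            (integrable_mul_tailIntegral_pow hf hf0 n).integrableOn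
      _ = ∫ t in Ioi s, f t * ((F s ^ (n + 1) - F t ^ (n + 1)) / (n + 1)) :=
          setIntegral_congr_fun measurableSet_Ioi fun t (ht : s < t) => by
            rw [integral_Ioo_mul_tailIntegral_pow_of_integral_Ioi hf hf0 ht.le ih]
      _ = (F s ^ (n + 1) * F s - J) / (n + 1) := by
          simp only [mul_sub, mul_div_assoc', integral_div]
          rw [integral_sub (hf.integrableOn.mul_const _)
            (integrable_mul_tailIntegral_pow hf hf0 _).integrableOn, integral_mul_const, mul_comm]
          rfl
    push_cast
    field_simp at hJ ⊢
    linear_combination hJ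

end TailIntegral

theorem summable_of_norm_le_mul_pow_div_factorial {E : Type*} [NormedAddCommGroup E]
    [CompleteSpace E] {a : ℕ → E} {A x : ℝ} (h : ∀ n, ‖a n‖ ≤ A * x ^ n / n.factorial) :
    Summable a :=
  .of_norm_bounded ((Real.summable_pow_div_factorial x).mul_left A)
    fun n => (h n).trans_eq (mul_div_assoc _ _ _)

theorem norm_tsum_sub_le_of_norm_le_mul_pow_div_factorial {E : Type*} [NormedAddCommGroup E]
    [CompleteSpace E] {a : ℕ → E} {A x : ℝ} (h : ∀ n, ‖a n‖ ≤ A * x ^ n / n.factorial) :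
    ‖∑' n, a n - a 0‖ ≤ A * (exp x - 1) := by
  have hexp : HasSum (fun n => A * x ^ n / n.factorial) (A * exp x) := by
    simpa only [mul_div_assoc, Real.exp_eq_exp_ℝ] using
      (NormedSpace.expSeries_div_hasSum_exp x).mul_left A
  have htail : HasSum (fun n => A * x ^ (n + 1) / (n + 1).factorial) (A * (exp x - 1)) := by
    rw [← hasSum_nat_add_iff' 1] at hexp
    simpa [mul_sub] using hexp
  rw [(summable_of_norm_le_mul_pow_div_factorial h).tsum_eq_zero_add, add_sub_cancel_left]
  exact tsum_of_norm_bounded htail fun n => h (n + 1)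

theorem norm_volterra_iterate_le {k : ℝ → ℝ → ℂ} {η : ℕ → ℝ → ℂ} {φ f : ℝ → ℝ} {a : ℝ}
    (hf : Integrable f) (hf0 : 0 ≤ f)
    (hk : ∀ s y, a < s → s < y → ‖k s y‖ * φ y ≤ φ s * f y)
    (hη₀ : ∀ s, a < s → ‖η 0 s‖ ≤ φ s)
    (hη : ∀ n, ∀ s, a < s → η (n + 1) s = ∫ y in Ioi s, k s y * η n y) (n : ℕ) {s : ℝ}
    (hs : a < s) : ‖η n s‖ ≤ φ s * tailIntegral f s ^ n / n.factorial := by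
  induction n generalizing s with
  | zero => simpa using hη₀ s hs
  | succ n ih =>
    calc ‖η (n + 1) s‖
        ≤ ∫ y in Ioi s, φ s / n.factorial * (f y * tailIntegral f y ^ n) := by
          rw [hη n s hs]
          refine norm_integral_le_of_norm_le
            ((integrable_mul_tailIntegral_pow hf hf0 n).integrableOn.const_mul _)
            ((ae_restrict_iff' measurableSet_Ioi).2 (ae_of_all _ fun y (hy : s < y) => ?_))
          calc ‖k s y * η n y‖ ≤ ‖k s y‖ * (φ y * tailIntegral f y ^ n / n.factorial) := by
                rw [norm_mul]; gcongr; exact ih (hs.trans hy)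
            _ = ‖k s y‖ * φ y * (tailIntegral f y ^ n / n.factorial) := by ring
            _ ≤ φ s * f y * (tailIntegral f y ^ n / n.factorial) := by
                have := tailIntegral_nonneg hf0 y
                exact mul_le_mul_of_nonneg_right (hk s y hs hy) (by positivity)
            _ = _ := by ring
      _ = φ s * tailIntegral f s ^ (n + 1) / (n + 1).factorial := by
          rw [integral_const_mul, integral_Ioi_mul_tailIntegral_pow hf hf0, Nat.factorial_succ]
          push_cast
          field_simp

theorem integrableOn_jost_weight {b c : ℝ} {W : ℝ → ℝ} (hb : b ≤ 0) (hc : 0 < c)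
    (hW : IntegrableOn W (Ioi 0)) :
    IntegrableOn (fun y => y * |W y| / (1 + c * y) * exp ((|b| + b) * y)) (Ioi 0) := by
  have hb' : |b| + b = 0 := by rw [abs_of_nonpos hb]; ring
  have hbdd : ∀ y ∈ Ioi (0 : ℝ), ‖y / (1 + c * y)‖ ≤ c⁻¹ := fun y (hy : 0 < y) => by
    rw [Real.norm_of_nonneg (by positivity), div_le_iff₀ (by positivity)]
    field_simp
    linarith
  refine IntegrableOn.congr_fun (hW.norm.bdd_mul (Measurable.aestronglyMeasurable (by fun_prop))
    ((ae_restrict_iff' measurableSet_Ioi).2 (ae_of_all _ hbdd))) (fun y _ => ?_) measurableSet_Ioi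
  simp only [hb', zero_mul, exp_zero, mul_one, Real.norm_eq_abs]
  ring

theorem jost_weight_identity {b c lam s y : ℝ} (hc : 0 ≤ c) (hs : 0 < s) (hy : 0 < y) :
    exp (|b| * y + b * s) * (y / (1 + c * y)) ^ (lam + 1/2) * (s / (1 + c * s)) ^ (-lam + 1/2)
      * ((c * y / (1 + c * y)) ^ (-lam + 1/2) * exp (b * y))
    = (c * s / (1 + c * s)) ^ (-lam + 1/2) * exp (b * s) *
        (y / (1 + c * y) * exp ((|b| + b) * y)) := by
  have hys : 0 ≤ y / (1 + c * y) := by positivity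
  have hss : 0 ≤ s / (1 + c * s) := by positivity
  rw [mul_div_assoc c y, mul_div_assoc c s, mul_rpow hc hys, mul_rpow hc hss]
  have hexp : exp (|b| * y + b * s) * exp (b * y) = exp (b * s) * exp ((|b| + b) * y) := by
    rw [← exp_add, ← exp_add]; ring_nf
  have hpow :
      (y / (1 + c * y)) ^ (lam + 1/2) * (y / (1 + c * y)) ^ (-lam + 1/2) = y / (1 + c * y) := by
    rw [← rpow_add' hys (by ring_nf; norm_num), show lam + 1/2 + (-lam + 1/2) = 1 by ring, rpow_one]
  calc _ = c ^ (-lam + 1/2) * (s / (1 + c * s)) ^ (-lam + 1/2) *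
        (exp (|b| * y + b * s) * exp (b * y)) *
        ((y / (1 + c * y)) ^ (lam + 1/2) * (y / (1 + c * y)) ^ (-lam + 1/2)) := by ring
    _ = _ := by rw [hexp, hpow]; ring

theorem norm_jost_kernel_mul_weight_le {B : ℂ} {w C lam b c s y : ℝ} (hC : 0 ≤ C) (hc : 0 ≤ c)
    (hs : 0 < s) (hy : 0 < y)
    (hB : ‖B‖ ≤ C * exp (|b| * y + b * s) * (y / (1 + c * y)) ^ (lam + 1/2) *
      (s / (1 + c * s)) ^ (-lam + 1/2)) :
    ‖B * w‖ * (C * (c * y / (1 + c * y)) ^ (-lam + 1/2) * exp (b * y))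
      ≤ C * (c * s / (1 + c * s)) ^ (-lam + 1/2) * exp (b * s) *
        (C * (y * |w| / (1 + c * y) * exp ((|b| + b) * y))) := calc
  _ = ‖B‖ * (C * |w| * ((c * y / (1 + c * y)) ^ (-lam + 1/2) * exp (b * y))) := by
      rw [norm_mul, Complex.norm_real, Real.norm_eq_abs]; ring
  _ ≤ C * exp (|b| * y + b * s) * (y / (1 + c * y)) ^ (lam + 1/2) *
      (s / (1 + c * s)) ^ (-lam + 1/2) *
      (C * |w| * ((c * y / (1 + c * y)) ^ (-lam + 1/2) * exp (b * y))) := by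
      gcongr
  _ = _ := by
      linear_combination (C * C * |w|) * jost_weight_identity (b := b) (lam := lam) hc hs hy

theorem stmt_13_general (lam C : ℝ) (hC : 0 < C) (ω : ℂ)
    (hω_im : ω.im ≤ 0) (hω_ne : ω ≠ 0)
    (W : ℝ → ℝ) (hW : IntegrableOn W (Ioi 0))
    (B : ℝ → ℝ → ℂ) (η : ℕ → ℝ → ℂ) (Q : ℝ → ℝ)
    (hQ : ∀ s, Q s = ∫ y in Ioi s,
      y * |W y| / (1 + ‖ω‖ * y) * Real.exp ((|ω.im| + ω.im) * y))
    (hB : ∀ s y : ℝ, 0 < s → s < y →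
      ‖B s y‖ ≤ C * Real.exp (|ω.im| * y + ω.im * s) *
        (y / (1 + ‖ω‖ * y)) ^ (lam + 1/2) *
        (s / (1 + ‖ω‖ * s)) ^ (-lam + 1/2))
    (hη0 : ∀ s > 0, ‖η 0 s‖ ≤
      C * (‖ω‖ * s / (1 + ‖ω‖ * s)) ^ (-lam + 1/2) *
        Real.exp (ω.im * s))
    (hrec : ∀ n : ℕ, ∀ s > 0, η (n + 1) s = ∫ y in Ioi s, B s y * W y * η n y) :
    (IntegrableOn (fun y =>
        y * |W y| / (1 + ‖ω‖ * y) * Real.exp ((|ω.im| + ω.im) * y))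
      (Ioi 0)) ∧
    (∀ n : ℕ, ∀ s > 0, ‖η n s‖ ≤ C * (C * Q s) ^ n / n.factorial *
        (‖ω‖ * s / (1 + ‖ω‖ * s)) ^ (-lam + 1/2) *
        Real.exp (ω.im * s)) ∧
    ∃ ηsum : ℝ → ℂ,
      (∀ s > 0, HasSum (fun n => η n s) (ηsum s)) ∧
      (∀ s > 0, ‖ηsum s - η 0 s‖ ≤ C * Real.exp (ω.im * s) *
        (‖ω‖ * s / (1 + ‖ω‖ * s)) ^ (-lam + 1/2) *
        (Real.exp (C * Q s) - 1)) := by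
  have hq := integrableOn_jost_weight hω_im (norm_pos_iff.2 hω_ne) hW
  set f := (Ioi 0).indicator fun y =>
    C * (y * |W y| / (1 + ‖ω‖ * y) * Real.exp ((|ω.im| + ω.im) * y))
  have hf : Integrable f := IntegrableOn.integrable_indicator (hq.const_mul C) measurableSet_Ioi
  have hf0 : 0 ≤ f := indicator_nonneg fun y (hy : 0 < y) => by positivity
  have htail : ∀ s, 0 ≤ s → tailIntegral f s = C * Q s := fun s hs => by
    rw [tailIntegral, integral_indicator measurableSet_Ioi,
      Measure.restrict_restrict measurableSet_Ioi, Ioi_inter_Ioi, max_eq_right hs,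
      integral_const_mul, hQ]
  have hη : ∀ n, ∀ s > 0, ‖η n s‖ ≤ C * (‖ω‖ * s / (1 + ‖ω‖ * s)) ^ (-lam + 1/2) *
      Real.exp (ω.im * s) * (C * Q s) ^ n / n.factorial := fun n s hs => by
    rw [← htail s hs.le]
    refine norm_volterra_iterate_le (k := fun s y => B s y * W y) hf hf0 (fun s y hs hsy => ?_)
      hη0 hrec n hs
    rw [show f y = _ from indicator_of_mem (mem_Ioi.2 (hs.trans hsy)) _]
    exact norm_jost_kernel_mul_weight_le hC.le (norm_nonneg ω) hs (hs.trans hsy) (hB s y hs hsy)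
  refine ⟨hq, fun n s hs => (hη n s hs).trans_eq (by ring), fun s => ∑' n, η n s,
    fun s hs => (summable_of_norm_le_mul_pow_div_factorial (hη · s hs)).hasSum,
    fun s hs => (norm_tsum_sub_le_of_norm_le_mul_pow_div_factorial (hη · s hs)).trans_eq (by ring)⟩

/-- The perturbation series for the Jost solution with boundary
condition at `s = ∞` (valid for `Im ω ≤ 0`): with
`Q(s) = ∫_s^∞ y|W(y)|/(1+|ω|y) e^{(|Im ω|+Im ω)y} dy`, the iterates satisfy
`|ηₙ(s)| ≤ C (C Q(s))ⁿ/n! (|ω|s/(1+|ω|s))^{-λ+1/2} e^{(Im ω)s}`, and the series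
`Σ ηₙ` converges with the stated bound on `Σ ηₙ - η₀`. -/
theorem stmt_13 (lam C : ℝ) (hlam : 0 < lam) (hC : 0 < C) (ω : ℂ)
    (hω_im : ω.im ≤ 0) (hω_ne : ω ≠ 0)
    (W : ℝ → ℝ) (hW : IntegrableOn W (Ioi 0))
    (B : ℝ → ℝ → ℂ) (η : ℕ → ℝ → ℂ) (Q : ℝ → ℝ)
    (hQ : ∀ s, Q s = ∫ y in Ioi s,
      y * |W y| / (1 + ‖ω‖ * y) * Real.exp ((|ω.im| + ω.im) * y))
    (hB : ∀ s y : ℝ, 0 < s → s < y →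
      ‖B s y‖ ≤ C * Real.exp (|ω.im| * y + ω.im * s) *
        (y / (1 + ‖ω‖ * y)) ^ (lam + 1/2) *
        (s / (1 + ‖ω‖ * s)) ^ (-lam + 1/2))
    (hη0 : ∀ s > 0, ‖η 0 s‖ ≤
      C * (‖ω‖ * s / (1 + ‖ω‖ * s)) ^ (-lam + 1/2) *
        Real.exp (ω.im * s))
    (hrec : ∀ n : ℕ, ∀ s > 0, η (n + 1) s = ∫ y in Ioi s, B s y * W y * η n y) :
    (IntegrableOn (fun y =>
        y * |W y| / (1 + ‖ω‖ * y) * Real.exp ((|ω.im| + ω.im) * y))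
      (Ioi 0)) ∧
    (∀ n : ℕ, ∀ s > 0, ‖η n s‖ ≤ C * (C * Q s) ^ n / n.factorial *
        (‖ω‖ * s / (1 + ‖ω‖ * s)) ^ (-lam + 1/2) *
        Real.exp (ω.im * s)) ∧
    ∃ ηsum : ℝ → ℂ,
      (∀ s > 0, HasSum (fun n => η n s) (ηsum s)) ∧
      (∀ s > 0, ‖ηsum s - η 0 s‖ ≤ C * Real.exp (ω.im * s) *
        (‖ω‖ * s / (1 + ‖ω‖ * s)) ^ (-lam + 1/2) *
        (Real.exp (C * Q s) - 1)) :=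
  stmt_13_general lam C hC ω hω_im hω_ne W hW B η Q hQ hB hη0 hrec
end

section
/- Let γ¹, γ² : (−∞,0) → ℝ be nonzero C² solutions of −γ'' + q(u)γ = 0 where q(u) = (r²/T²)l(l+1) ≥ 0 (and q not identically 0 when l ≥ 1). Suppose γ²(u) → 0 as u → 0⁻ while γ¹ tends to a finite limit (possibly 0) as u → −∞. If γ¹ and γ² were linearly dependent then both would be bounded convex/concave solutions vanishing appropriately at both ends, forcing γ ≡ 0, a contradiction. Hence γ¹, γ² are linearly independent and their Wronskian w(γ¹,γ²) = γ¹(γ²)' − (γ¹)'γ² is a nonzero constant. -/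
/-!
For a solution of `γ'' = q γ` with `q ≥ 0` one has `(γ²)'' = 2γ'² + 2qγ² ≥ 0`, so `γ²` is convex.
A convex function on `(-∞, a)` that stays bounded as `u → -∞` is nondecreasing, hence a solution
with a finite limit at `-∞` and limit `0` at `a⁻` vanishes identically. So `γ¹` cannot tend to `0`
at `0⁻`, which rules out `γ¹` being a multiple of `γ²`. The Wronskian is constant; if it were `0`,
then `γ¹` and `(γ¹(u₀)/γ²(u₀)) γ²` would have the same Cauchy data at a point `u₀` with
`γ²(u₀) ≠ 0`, and uniqueness for the linear ODE would make them equal.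
-/

open Set Filter Topology NNReal

/-- `γ` solves the zero-energy Schrödinger equation `-γ'' + q γ = 0` on `s`, with `γ'` its
derivative. -/
def SolvesSchrodingerOn (q : ℝ → ℝ) (s : Set ℝ) (γ γ' : ℝ → ℝ) : Prop :=
  ∀ u ∈ s, HasDerivAt γ (γ' u) u ∧ HasDerivAt γ' (q u * γ u) u

theorem ContDiffOn.solvesSchrodingerOn {q γ : ℝ → ℝ} {s : Set ℝ} (hs : IsOpen s)
    (hγ : ContDiffOn ℝ 2 γ s) (hode : ∀ u ∈ s, deriv (deriv γ) u = q u * γ u) :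
    SolvesSchrodingerOn q s γ (deriv γ) := fun u hu => by
  have hγ' : ContDiffOn ℝ 1 (deriv γ) s := hγ.deriv_of_isOpen hs (by norm_num)
  refine ⟨((hγ.differentiableOn two_ne_zero u hu).differentiableAt (hs.mem_nhds hu)).hasDerivAt, ?_⟩
  rw [← hode u hu]
  exact ((hγ'.differentiableOn one_ne_zero u hu).differentiableAt (hs.mem_nhds hu)).hasDerivAt

theorem ConvexOn.monotoneOn_of_isBoundedUnder_le_atBot {f : ℝ → ℝ} {a : ℝ}
    (hf : ConvexOn ℝ (Iio a) f) (hbdd : IsBoundedUnder (· ≤ ·) atBot f) :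
    MonotoneOn f (Iio a) := by
  intro u hu v hv huv
  rcases huv.eq_or_lt with rfl | huv
  · rfl
  by_contra! hvu
  set s := (f u - f v) / (v - u)
  have hs : 0 < s := div_pos (by linarith) (by linarith)
  have hline : ∀ w < u, f u + s * (u - w) ≤ f w := fun w hwu => by
    have hslope := hf.slope_mono_adjacent (hwu.trans hu) hv hwu huv
    rw [show (f v - f u) / (v - u) = -s by rw [← neg_div, neg_sub],
      div_le_iff₀ (sub_pos.2 hwu)] at hslope
    linarith
  have hlin : Tendsto (fun w => f u + s * (u - w)) atBot atTop :=
    tendsto_atTop_add_const_left _ _ <| (tendsto_atTop_add_const_left _ u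
      tendsto_neg_atBot_atTop).const_mul_atTop hs
  exact not_isBoundedUnder_of_tendsto_atTop (tendsto_atTop_mono' _
    ((eventually_lt_atBot u).mono hline) hlin) hbdd

namespace SolvesSchrodingerOn

variable {q γ γ' δ δ' : ℝ → ℝ} {s t : Set ℝ}

theorem mono (h : SolvesSchrodingerOn q s γ γ') (hts : t ⊆ s) : SolvesSchrodingerOn q t γ γ' :=
  fun u hu => h u (hts hu)

theorem const_mul (h : SolvesSchrodingerOn q s γ γ') (c : ℝ) :
    SolvesSchrodingerOn q s (fun u => c * γ u) (fun u => c * γ' u) := fun u hu =>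
  ⟨(h u hu).1.const_mul c, by simpa only [mul_left_comm] using (h u hu).2.const_mul c⟩

theorem convexOn_sq (h : SolvesSchrodingerOn q s γ γ') (hs : Convex ℝ s) (hq : ∀ u ∈ s, 0 ≤ q u) :
    ConvexOn ℝ s (fun u => γ u ^ 2) := by
  refine convexOn_of_hasDerivWithinAt2_nonneg hs
    (fun u hu => ((h u hu).1.continuousAt.pow 2).continuousWithinAt) (f' := fun u => 2 * γ u * γ' u)
    (f'' := fun u => 2 * (γ' u ^ 2 + q u * γ u ^ 2)) (fun u hu => ?_) (fun u hu => ?_)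
    (fun u hu => ?_)
  · have hu := interior_subset hu
    exact (((h u hu).1.pow 2).congr_deriv (by ring)).hasDerivWithinAt
  · obtain ⟨hγ, hγ'⟩ := h u (interior_subset hu)
    exact (((hγ.const_mul 2).mul hγ').congr_deriv (by ring)).hasDerivWithinAt
  · have hu := interior_subset hu
    have := hq u hu
    positivity

theorem eqOn_zero_of_tendsto {a L : ℝ} (h : SolvesSchrodingerOn q (Iio a) γ γ')
    (hq : ∀ u ∈ Iio a, 0 ≤ q u) (hright : Tendsto γ (𝓝[<] a) (𝓝 0))
    (hleft : Tendsto γ atBot (𝓝 L)) : EqOn γ 0 (Iio a) := by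
  have hmono := (h.convexOn_sq (convex_Iio a) hq).monotoneOn_of_isBoundedUnder_le_atBot
    (hleft.pow 2).isBoundedUnder_le
  intro u hu
  have hsq : γ u ^ 2 ≤ 0 := by
    refine ge_of_tendsto (by simpa using hright.pow 2) ?_
    filter_upwards [Ioo_mem_nhdsLT hu] with v hv
    exact hmono hu hv.2 hv.1.le
  exact pow_eq_zero_iff two_ne_zero |>.1 (hsq.antisymm (sq_nonneg _))

theorem eqOn_Ioo {a b t₀ : ℝ} {C : ℝ≥0} (hq : ∀ t ∈ Ioo a b, ‖q t‖₊ ≤ C)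
    (hγ : SolvesSchrodingerOn q (Ioo a b) γ γ') (hδ : SolvesSchrodingerOn q (Ioo a b) δ δ')
    (ht₀ : t₀ ∈ Ioo a b) (h₀ : γ t₀ = δ t₀) (h₀' : γ' t₀ = δ' t₀) : EqOn γ δ (Ioo a b) := by
  have hv : ∀ t ∈ Ioo a b, LipschitzOnWith (max 1 C) (fun p : ℝ × ℝ => (p.2, q t • p.1)) univ :=
    fun t ht => ((LipschitzWith.prod_snd.prodMk ((lipschitzWith_smul (q t)).comp
      LipschitzWith.prod_fst)).weaken
      (max_le_max le_rfl (by simpa using hq t ht))).lipschitzOnWith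
  have hsys := ODE_solution_unique_of_mem_Ioo (f := fun t => (γ t, γ' t))
    (g := fun t => (δ t, δ' t)) hv ht₀ (fun t ht => ⟨(hγ t ht).1.prodMk (hγ t ht).2, mem_univ _⟩)
    (fun t ht => ⟨(hδ t ht).1.prodMk (hδ t ht).2, mem_univ _⟩) (Prod.ext h₀ h₀')
  exact fun t ht => congrArg Prod.fst (hsys ht)

theorem eqOn_Iio {c t₀ : ℝ} (hq : ContinuousOn q (Iio c))
    (hγ : SolvesSchrodingerOn q (Iio c) γ γ') (hδ : SolvesSchrodingerOn q (Iio c) δ δ')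
    (ht₀ : t₀ ∈ Iio c) (h₀ : γ t₀ = δ t₀) (h₀' : γ' t₀ = δ' t₀) : EqOn γ δ (Iio c) := by
  intro t ht
  have hmax : max t t₀ < c := max_lt ht ht₀
  have hsub : Icc (min t t₀ - 1) ((max t t₀ + c) / 2) ⊆ Iio c := fun u hu =>
    lt_of_le_of_lt hu.2 (by linarith)
  have hmem : ∀ u, min t t₀ ≤ u → u ≤ max t t₀ → u ∈ Ioo (min t t₀ - 1) ((max t t₀ + c) / 2) :=
    fun u h₁ h₂ => ⟨by linarith, by linarith⟩
  obtain ⟨C, hC⟩ := isCompact_Icc.exists_bound_of_continuousOn (hq.mono hsub)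
  refine (hγ.mono (Ioo_subset_Icc_self.trans hsub)).eqOn_Ioo (C := C.toNNReal)
    (fun u hu => ?_) (hδ.mono (Ioo_subset_Icc_self.trans hsub))
    (hmem t₀ (min_le_right _ _) (le_max_right _ _)) h₀ h₀'
    (hmem t (min_le_left _ _) (le_max_left _ _))
  exact NNReal.le_toNNReal_of_coe_le (hC u (Ioo_subset_Icc_self hu))

theorem wronskian_eq (hγ : SolvesSchrodingerOn q s γ γ') (hδ : SolvesSchrodingerOn q s δ δ')
    (hs : IsOpen s) (hs' : IsPreconnected s) {x y : ℝ} (hx : x ∈ s) (hy : y ∈ s) :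
    γ x * δ' x - γ' x * δ x = γ y * δ' y - γ' y * δ y := by
  have hW : ∀ u ∈ s, HasDerivAt (fun u => γ u * δ' u - γ' u * δ u) 0 u := fun u hu =>
    (((hγ u hu).1.mul (hδ u hu).2).sub ((hγ u hu).2.mul (hδ u hu).1)).congr_deriv (by ring)
  exact hs.is_const_of_deriv_eq_zero hs'
    (fun u hu => (hW u hu).differentiableAt.differentiableWithinAt)
    (fun u hu => (hW u hu).deriv) hx hy

end SolvesSchrodingerOn

/-- For nonzero `C²` solutions `γ¹, γ²` of `-γ'' + qγ = 0` on
`(-∞,0)` with `q ≥ 0` continuous, where `γ² → 0` as `u → 0⁻` and `γ¹` has a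
finite limit as `u → -∞`, the solutions are linearly independent and their
Wronskian is a nonzero constant. -/
theorem stmt_14 (q γ1 γ2 : ℝ → ℝ)
    (hq_cont : ContinuousOn q (Iio 0))
    (hq_pos : ∀ u ∈ Iio (0:ℝ), 0 ≤ q u)
    (hγ1_smooth : ContDiffOn ℝ 2 γ1 (Iio 0))
    (hγ2_smooth : ContDiffOn ℝ 2 γ2 (Iio 0))
    (hγ1_ode : ∀ u ∈ Iio (0:ℝ), deriv (deriv γ1) u = q u * γ1 u)
    (hγ2_ode : ∀ u ∈ Iio (0:ℝ), deriv (deriv γ2) u = q u * γ2 u)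
    (hγ1_ne : ∃ u ∈ Iio (0:ℝ), γ1 u ≠ 0)
    (hγ2_ne : ∃ u ∈ Iio (0:ℝ), γ2 u ≠ 0)
    (hγ2_bc : Tendsto γ2 (nhdsWithin 0 (Iio 0)) (nhds 0))
    (hγ1_bc : ∃ L : ℝ, Tendsto γ1 atBot (nhds L)) :
    (∀ a b : ℝ, (∀ u ∈ Iio (0:ℝ), a * γ1 u + b * γ2 u = 0) → a = 0 ∧ b = 0) ∧
    ∃ w : ℝ, w ≠ 0 ∧
      ∀ u ∈ Iio (0:ℝ), γ1 u * deriv γ2 u - deriv γ1 u * γ2 u = w := by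
  have sol1 := hγ1_smooth.solvesSchrodingerOn isOpen_Iio hγ1_ode
  have sol2 := hγ2_smooth.solvesSchrodingerOn isOpen_Iio hγ2_ode
  obtain ⟨u₀, hu₀, hγ2u₀⟩ := hγ2_ne
  have hγ1_not_tendsto : ¬ Tendsto γ1 (𝓝[<] 0) (𝓝 0) := fun h => by
    obtain ⟨u, hu, hγ1u⟩ := hγ1_ne
    obtain ⟨L, hL⟩ := hγ1_bc
    exact hγ1u (sol1.eqOn_zero_of_tendsto hq_pos h hL hu)
  have indep : ∀ a b : ℝ, (∀ u ∈ Iio (0:ℝ), a * γ1 u + b * γ2 u = 0) → a = 0 ∧ b = 0 := by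
    intro a b hab
    have ha : a = 0 := by
      by_contra ha
      have hγ1 : ∀ u ∈ Iio (0:ℝ), -b / a * γ2 u = γ1 u := fun u hu => by
        field_simp
        linarith [hab u hu]
      have hlim := hγ2_bc.const_mul (-b / a)
      rw [mul_zero] at hlim
      exact hγ1_not_tendsto (hlim.congr' (eventually_nhdsWithin_of_forall hγ1))
    refine ⟨ha, ?_⟩
    simpa [ha, hγ2u₀] using hab u₀ hu₀
  refine ⟨indep, _, fun hW => ?_, fun u hu => sol1.wronskian_eq sol2 isOpen_Iio
    (convex_Iio 0).isPreconnected hu hu₀⟩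
  set c := γ1 u₀ / γ2 u₀
  have hc : γ1 u₀ = c * γ2 u₀ := (div_mul_cancel₀ _ hγ2u₀).symm
  have hc' : deriv γ1 u₀ = c * deriv γ2 u₀ := by
    rw [div_mul_eq_mul_div, eq_div_iff hγ2u₀]
    linarith
  have hγ1_eq : EqOn γ1 (fun u => c * γ2 u) (Iio 0) :=
    sol1.eqOn_Iio hq_cont (sol2.const_mul c) hu₀ hc hc'
  exact one_ne_zero (indep 1 (-c) fun u hu => by rw [hγ1_eq hu]; ring).1
end
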